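/- Let C be a semisimple abelian monoidal category with biexact tensor product. Then for every algebra A in C, the unit u_A : 1 → A is a regular morphism, and hence the functor - ⊗ A : C → Mod_A(C) is semiseparable. -/

import Mathlib

/-!
STATEMENT 4: Let `C` be a semisimple abelian monoidal category with biexact tensor
product. Then for every algebra `A` in `C`, the unit `u_A : 𝟙_C ⟶ A` is a regular
morphism, and hence the free module functor `C ⥤ Mod_A(C)` is semiseparable.
-/

open CategoryTheory CategoryTheory.Limits MonoidalCategory

universe v u v₂ u₂

attribute [local instance] CategoryTheory.Limits.HasFiniteBiproducts.of_hasFiniteProducts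

/-- A morphism `f` is regular if there is `g` with `f ≫ g ≫ f = f`. -/
def CategoryTheory.IsRegularHom {C : Type u} [Category.{v} C] {X Y : C} (f : X ⟶ Y) : Prop :=
  ∃ g : Y ⟶ X, f ≫ g ≫ f = f

/-- A category is semisimple if every object is a finite direct sum (biproduct)
of simple objects. -/
def CategoryTheory.IsSemisimple (C : Type u) [Category.{v} C] [HasZeroMorphisms C]
    [HasFiniteBiproducts C] : Prop :=
  ∀ X : C, ∃ (ι : Type) (_ : Fintype ι) (S : ι → C) (_ : ∀ i, Simple (S i)),
    Nonempty (X ≅ ⨁ S)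

/-- The data exhibiting a functor `F` as semiseparable: a natural transformation
`ψ : Hom(F-,F-) → Hom(-,-)` with `φ ∘ ψ ∘ φ = φ`, where `φ` is given by `F`. -/
structure CategoryTheory.Functor.SemiseparabilityStructure {C : Type u} [Category.{v} C]
    {D : Type u₂} [Category.{v₂} D] (F : C ⥤ D) where
  retr : ∀ {X Y : C}, (F.obj X ⟶ F.obj Y) → (X ⟶ Y)
  naturality : ∀ {X X' Y Y' : C} (u : X' ⟶ X) (v : Y ⟶ Y') (h : F.obj X ⟶ F.obj Y),
    retr (F.map u ≫ h ≫ F.map v) = u ≫ retr h ≫ v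
  map_retr_map : ∀ {X Y : C} (f : X ⟶ Y), F.map (retr (F.map f)) = F.map f

/-- A functor `F` is semiseparable if `φ ∘ ψ ∘ φ = φ` for some natural `ψ`. -/
def CategoryTheory.Functor.Semiseparable {C : Type u} [Category.{v} C]
    {D : Type u₂} [Category.{v₂} D] (F : C ⥤ D) : Prop :=
  Nonempty F.SemiseparabilityStructure

/-- The free module functor by an algebra `A`, sending `M` to the free `A`-module `A ⊗ M`. -/
def freeMod {C : Type u} [Category.{v} C] [MonoidalCategory C] (A : Mon C) : C ⥤ Mod C A.X where
  obj M :=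
    { X := A.X ⊗ M
      mod :=
        { smul := (α_ A.X A.X M).inv ≫ (MonObj.mul ▷ M)
          one_smul := by
            dsimp
            rw [associator_inv_naturality_left_assoc, ← comp_whiskerRight, MonObj.one_mul,
              leftUnitor_tensor_hom]
          mul_smul := by
            dsimp
            slice_lhs 1 2 => rw [associator_inv_naturality_left]
            slice_lhs 2 3 => rw [← comp_whiskerRight, MonObj.mul_assoc]
            simp only [MonoidalCategory.whiskerLeft_comp, comp_whiskerRight, Category.assoc]
            coherence } }
  map f := Mod.Hom.mk' (A.X ◁ f) (by
        change ((α_ A.X A.X _).inv ≫ (MonObj.mul ▷ _)) ≫ A.X ◁ f =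
          A.X ◁ A.X ◁ f ≫ ((α_ A.X A.X _).inv ≫ (MonObj.mul ▷ _))
        rw [Category.assoc, ← whisker_exchange, associator_inv_naturality_right_assoc])
  map_id M := by ext; exact MonoidalCategory.whiskerLeft_id A.X M
  map_comp f g := by ext; exact MonoidalCategory.whiskerLeft_comp A.X f g

/-!
In a semisimple abelian category an epimorphism onto a simple object splits: decompose its
source into simples, and by Schur's lemma some nonzero component is an isomorphism. Pulling back
along maps out of a simple object then shows that simples, hence all objects, are projective.
So every epimorphism splits, and so does every monomorphism (its cokernel sequence splits), and a
morphism, being an epimorphism followed by a monomorphism, is regular.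

If `η ≫ g ≫ η = η` for the unit `η` of `A`, then `ψ(h) = (η ⊗ X) ≫ h ≫ (g ⊗ Y)` is natural,
and `A ⊗ ψ(A ⊗ f) = A ⊗ f` because the scalar `e = η ≫ g` acts trivially on `A`:
`A ◁ e ≫ ρ_A = A ◁ (e ≫ η) ≫ μ = A ◁ η ≫ μ = ρ_A`.
-/

theorem CategoryTheory.IsRegularHom.of_fac {C : Type u} [Category.{v} C] {X I Y : C}
    {f : X ⟶ Y} (e : X ⟶ I) (m : I ⟶ Y) [IsSplitEpi e] [IsSplitMono m] (fac : e ≫ m = f) :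
    IsRegularHom f :=
  ⟨retraction m ≫ section_ e, by simp [← fac]⟩

namespace CategoryTheory.IsSemisimple

variable {C : Type u} [Category.{v} C] [Abelian C]

theorem isSplitEpi_of_epi_of_simple (hC : IsSemisimple C) {X S : C} [Simple S] (q : X ⟶ S)
    [Epi q] : IsSplitEpi q := by
  obtain ⟨ι, _, T, hT, ⟨e⟩⟩ := hC X
  have hq : q ≠ 0 := fun h => id_nonzero S ((cancel_epi q).mp (by simp [h]))
  obtain ⟨i, hi⟩ : ∃ i, biproduct.ι T i ≫ e.inv ≫ q ≠ 0 := by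
    by_contra! h
    exact hq (zero_of_epi_comp e.inv (biproduct.hom_ext' _ _ (by simpa using h)))
  have := hT i
  have := isIso_of_hom_simple hi
  exact ⟨⟨inv (biproduct.ι T i ≫ e.inv ≫ q) ≫ biproduct.ι T i ≫ e.inv, by simp⟩⟩

theorem projective_of_simple (hC : IsSemisimple C) (S : C) [Simple S] : Projective S where
  factors {_ _} f e _ := by
    have := hC.isSplitEpi_of_epi_of_simple (pullback.snd e f)
    exact ⟨section_ (pullback.snd e f) ≫ pullback.fst e f, by simp [pullback.condition]⟩

theorem projective (hC : IsSemisimple C) (X : C) : Projective X := by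
  obtain ⟨ι, _, S, hS, ⟨e⟩⟩ := hC X
  have := fun i => hC.projective_of_simple (S i)
  refine Projective.of_iso e.symm ⟨fun f q _ => ?_⟩
  exact ⟨biproduct.desc fun i => Projective.factorThru (biproduct.ι S i ≫ f) q, by cat_disch⟩

theorem isSplitEpi_of_epi (hC : IsSemisimple C) {X Y : C} (q : X ⟶ Y) [Epi q] : IsSplitEpi q :=
  have := hC.projective Y
  ⟨⟨Projective.factorThru (𝟙 Y) q, by simp⟩⟩

theorem isSplitMono_of_mono (hC : IsSemisimple C) {X Y : C} (m : X ⟶ Y) [Mono m] :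
    IsSplitMono m :=
  have : Mono (ShortComplex.cokernelSequence m).f := ‹Mono m›
  have : Projective (ShortComplex.cokernelSequence m).X₃ := hC.projective _
  (ShortComplex.ShortExact.splittingOfProjective
    ⟨ShortComplex.cokernelSequence_exact m⟩).isSplitMono_f

theorem isRegularHom (hC : IsSemisimple C) {X Y : C} (f : X ⟶ Y) : IsRegularHom f :=
  have := hC.isSplitMono_of_mono (image.ι f)
  have := hC.isSplitEpi_of_epi (factorThruImage f)
  .of_fac (factorThruImage f) (image.ι f) (image.fac f)

end CategoryTheory.IsSemisimple

section FreeModule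

variable {C : Type u} [Category.{v} C] [MonoidalCategory C]

def sandwichHom {B : C} (η : 𝟙_ C ⟶ B) (g : B ⟶ 𝟙_ C) {X Y : C} (h : B ⊗ X ⟶ B ⊗ Y) :
    X ⟶ Y :=
  (λ_ X).inv ≫ η ▷ X ≫ h ≫ g ▷ Y ≫ (λ_ Y).hom

theorem sandwichHom_naturality {B : C} (η : 𝟙_ C ⟶ B) (g : B ⟶ 𝟙_ C) {X X' Y Y' : C}
    (u : X' ⟶ X) (v : Y ⟶ Y') (h : B ⊗ X ⟶ B ⊗ Y) :
    sandwichHom η g (B ◁ u ≫ h ≫ B ◁ v) = u ≫ sandwichHom η g h ≫ v := by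
  simp only [sandwichHom, Category.assoc]
  rw [← whisker_exchange_assoc, ← leftUnitor_inv_naturality_assoc, whisker_exchange_assoc,
    leftUnitor_naturality]

theorem sandwichHom_whiskerLeft {B : C} (η : 𝟙_ C ⟶ B) (g : B ⟶ 𝟙_ C) {X Y : C} (f : X ⟶ Y) :
    sandwichHom η g (B ◁ f) = f ≫ (λ_ Y).inv ≫ (η ≫ g) ▷ Y ≫ (λ_ Y).hom := by
  rw [sandwichHom, ← whisker_exchange_assoc, ← leftUnitor_inv_naturality_assoc,
    comp_whiskerRight_assoc]

theorem whiskerLeft_leftUnitor_conj (e : 𝟙_ C ⟶ 𝟙_ C) (B Y : C) :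
    B ◁ ((λ_ Y).inv ≫ e ▷ Y ≫ (λ_ Y).hom) = ((ρ_ B).inv ≫ B ◁ e ≫ (ρ_ B).hom) ▷ Y := by
  monoidal

theorem CategoryTheory.Mon.whiskerLeft_leftUnitor_conj_eq_id (A : Mon C) {e : 𝟙_ C ⟶ 𝟙_ C}
    (he : e ≫ MonObj.one = (MonObj.one : 𝟙_ C ⟶ A.X)) (Y : C) :
    A.X ◁ ((λ_ Y).inv ≫ e ▷ Y ≫ (λ_ Y).hom) = 𝟙 _ := by
  have : A.X ◁ e ≫ (ρ_ A.X).hom = (ρ_ A.X).hom := by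
    rw [← MonObj.mul_one A.X, ← whiskerLeft_comp_assoc, he]
  rw [whiskerLeft_leftUnitor_conj, this, Iso.inv_hom_id, id_whiskerRight]

theorem freeMod_map_hom (A : Mon C) {X Y : C} (f : X ⟶ Y) :
    ((freeMod A).map f).hom = A.X ◁ f := rfl

def freeModSemiseparabilityStructure (A : Mon C) {g : A.X ⟶ 𝟙_ C}
    (hg : MonObj.one ≫ g ≫ MonObj.one = (MonObj.one : 𝟙_ C ⟶ A.X)) :
    (freeMod A).SemiseparabilityStructure where
  retr h := sandwichHom MonObj.one g h.hom
  naturality u v h := sandwichHom_naturality _ _ u v h.hom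
  map_retr_map f := by
    ext
    rw [freeMod_map_hom, freeMod_map_hom, sandwichHom_whiskerLeft, whiskerLeft_comp,
      A.whiskerLeft_leftUnitor_conj_eq_id (by rw [Category.assoc, hg]), Category.comp_id]

theorem freeMod_semiseparable_of_isRegularHom (A : Mon C)
    (h : IsRegularHom (MonObj.one : 𝟙_ C ⟶ A.X)) : (freeMod A).Semiseparable :=
  let ⟨_, hg⟩ := h
  ⟨freeModSemiseparabilityStructure A hg⟩

end FreeModule

theorem isRegularHom_one_and_freeMod_semiseparable
    (C : Type u) [Category.{v} C] [Abelian C] [MonoidalCategory C] [MonoidalPreadditive C]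
    [∀ X : C, PreservesFiniteLimits (tensorLeft X)]
    [∀ X : C, PreservesFiniteColimits (tensorLeft X)]
    [∀ X : C, PreservesFiniteLimits (tensorRight X)]
    [∀ X : C, PreservesFiniteColimits (tensorRight X)]
    (hC : CategoryTheory.IsSemisimple C) (A : Mon C) :
    CategoryTheory.IsRegularHom (MonObj.one : 𝟙_ C ⟶ A.X) ∧ (freeMod A).Semiseparable := by
  have hη := hC.isRegularHom (MonObj.one : 𝟙_ C ⟶ A.X)
  exact ⟨hη, freeMod_semiseparable_of_isRegularHom A hη⟩
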